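/- (Barrier certificate theorem) Let f : ℝⁿ → ℝⁿ be continuous and locally Lipschitz, and consider ẋ = f(x) with solutions complete on [0,∞). Let D, X₀ ⊂ ℝⁿ and B : ℝⁿ → ℝ be continuously differentiable with: B(ξ) > 0 for all ξ ∈ D; B(ξ) < 0 for all ξ ∈ X₀; and ⟨∇B(ξ), f(ξ)⟩ ≤ -α(|ξ|_D) for all ξ with some class K function α, where |ξ|_D is the distance to D. Then for every x₀ ∈ X₀ the solution x(t) satisfies B(x(t)) < 0 for all t ≥ 0; in particular x(t) ∉ D for all t ≥ 0 (the system is safe). -/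

import Mathlib

/-! Along a solution, the chain rule gives `d/dt B(x(t)) = B'(x(t)) (f(x(t))) ≤ -α(|x(t)|_D) ≤ 0`,
so `B ∘ x` is antitone on `[0, ∞)`. Hence `B(x(t)) ≤ B(x₀) < 0`, while `B > 0` on `D`. -/

open Set

lemma StrictMonoOn.nonneg_of_map_zero {α : ℝ → ℝ} (hαm : StrictMonoOn α (Ici 0)) (hα0 : α 0 = 0)
    {r : ℝ} (hr : 0 ≤ r) : 0 ≤ α r :=
  hα0 ▸ hαm.monotoneOn self_mem_Ici hr hr

lemma antitoneOn_comp_of_fderiv_apply_nonpos {E : Type*} [NormedAddCommGroup E] [NormedSpace ℝ E]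
    {f : E → E} {B : E → ℝ} (hB : Differentiable ℝ B) (hdecr : ∀ ξ, fderiv ℝ B ξ (f ξ) ≤ 0)
    {x : ℝ → E} {t₀ : ℝ} (hsol : ∀ t ≥ t₀, HasDerivAt x (f (x t)) t) :
    AntitoneOn (B ∘ x) (Ici t₀) := by
  have hderiv : ∀ t ≥ t₀, HasDerivAt (B ∘ x) (fderiv ℝ B (x t) (f (x t))) t := fun t ht =>
    (hB (x t)).hasFDerivAt.comp_hasDerivAt t (hsol t ht)
  apply antitoneOn_of_deriv_nonpos (convex_Ici t₀)
  · exact fun t ht => (hderiv t ht).continuousAt.continuousWithinAt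
  · rw [interior_Ici]
    exact fun t ht => (hderiv t (le_of_lt ht)).differentiableAt.differentiableWithinAt
  · rw [interior_Ici]
    intro t ht
    rw [(hderiv t (le_of_lt ht)).deriv]
    exact hdecr _

theorem stmt14_general {n : ℕ}
    (f : EuclideanSpace ℝ (Fin n) → EuclideanSpace ℝ (Fin n))
    (D X₀ : Set (EuclideanSpace ℝ (Fin n)))
    (B : EuclideanSpace ℝ (Fin n) → ℝ) (hB : ContDiff ℝ 1 B)
    (α : ℝ → ℝ)
    (hαm : StrictMonoOn α (Set.Ici 0)) (hα0 : α 0 = 0)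
    (hBD : ∀ ξ ∈ D, 0 < B ξ) (hBX0 : ∀ ξ ∈ X₀, B ξ < 0)
    (hdiss : ∀ ξ, fderiv ℝ B ξ (f ξ) ≤ -α (Metric.infDist ξ D))
    (x : ℝ → EuclideanSpace ℝ (Fin n)) (hx0 : x 0 ∈ X₀)
    (hsol : ∀ t ≥ 0, HasDerivAt x (f (x t)) t) :
    ∀ t ≥ 0, B (x t) < 0 ∧ x t ∉ D := by
  have hdecr : ∀ ξ, fderiv ℝ B ξ (f ξ) ≤ 0 := fun ξ =>
    (hdiss ξ).trans (neg_nonpos.mpr (hαm.nonneg_of_map_zero hα0 Metric.infDist_nonneg))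
  have hanti := antitoneOn_comp_of_fderiv_apply_nonpos (hB.differentiable one_ne_zero) hdecr hsol
  intro t ht
  have hBt : B (x t) < 0 := (hanti self_mem_Ici ht ht).trans_lt (hBX0 _ hx0)
  exact ⟨hBt, fun hD => (hBD _ hD).not_gt hBt⟩

/-- Barrier certificate theorem (strict version): if B > 0 on D, B < 0 on X₀,
and ⟨∇B(ξ), f(ξ)⟩ ≤ -α(|ξ|_D) with α of class K, then every solution starting
in X₀ satisfies B(x(t)) < 0 for all t ≥ 0, hence avoids D. -/
theorem stmt14 {n : ℕ}
    (f : EuclideanSpace ℝ (Fin n) → EuclideanSpace ℝ (Fin n))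
    (hfc : Continuous f) (hf : LocallyLipschitz f)
    (D X₀ : Set (EuclideanSpace ℝ (Fin n)))
    (B : EuclideanSpace ℝ (Fin n) → ℝ) (hB : ContDiff ℝ 1 B)
    (α : ℝ → ℝ) (hαc : ContinuousOn α (Set.Ici 0))
    (hαm : StrictMonoOn α (Set.Ici 0)) (hα0 : α 0 = 0)
    (hBD : ∀ ξ ∈ D, 0 < B ξ) (hBX0 : ∀ ξ ∈ X₀, B ξ < 0)
    (hdiss : ∀ ξ, fderiv ℝ B ξ (f ξ) ≤ -α (Metric.infDist ξ D))
    (x : ℝ → EuclideanSpace ℝ (Fin n)) (hx0 : x 0 ∈ X₀)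
    (hsol : ∀ t ≥ 0, HasDerivAt x (f (x t)) t) :
    ∀ t ≥ 0, B (x t) < 0 ∧ x t ∉ D :=
  stmt14_general f D X₀ B hB α hαm hα0 hBD hBX0 hdiss x hx0 hsol
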